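/- Let X = (1/N)(α Π_sym + β |φ⁺⟩⟨φ⁺|) on ℂ²⊗ℂ², where Π_sym is the projector onto the symmetric subspace, |φ⁺⟩ = (|00⟩+|11⟩)/√2, α = (2+√2)/4 and β = √2/4. Then for every unit vector |ψ⟩ ∈ ℝ² (a real qubit), (1/N)|ψ⟩⟨ψ| ⊗ |ψ⟩⟨ψ| ⪯ X, and Tr(X) = (1/N)(3/2 + √2). Hence the maximal 2-copy discriminability of N ≥ 3 pure real qubits is at most (1/N)(3/2 + √2). -/

import Mathlib

open ComplexOrder Matrix
open scoped BigOperators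

/-- The projector onto the symmetric subspace of `ℂ² ⊗ ℂ²` (basis indexed by
`Fin 2 × Fin 2`): `Π_sym = (𝕀 + SWAP)/2`. -/
noncomputable def symProj2 : Matrix (Fin 2 × Fin 2) (Fin 2 × Fin 2) ℂ :=
  Matrix.of fun p q =>
    (2 : ℂ)⁻¹ * ((if p = q then 1 else 0) + (if p.1 = q.2 ∧ p.2 = q.1 then 1 else 0))

/-- The projector `|φ⁺⟩⟨φ⁺|` onto the maximally entangled state
`|φ⁺⟩ = (|00⟩+|11⟩)/√2`. -/
noncomputable def phiPlusProj : Matrix (Fin 2 × Fin 2) (Fin 2 × Fin 2) ℂ :=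
  Matrix.of fun p q =>
    (2 : ℂ)⁻¹ * ((if p.1 = p.2 then 1 else 0) * (if q.1 = q.2 then 1 else 0))

/-- `|ψ⟩⟨ψ| ⊗ |ψ⟩⟨ψ|` for a real vector `ψ ∈ ℝ²`. -/
noncomputable def realTwoCopy (v : Fin 2 → ℝ) : Matrix (Fin 2 × Fin 2) (Fin 2 × Fin 2) ℂ :=
  Matrix.of fun p q => ((v p.1 * v p.2 * v q.1 * v q.2 : ℝ) : ℂ)

/-- The essential scalar inequality: the quadratic form of
`α Π_sym + β |φ⁺⟩⟨φ⁺| - |ψψ⟩⟨ψψ|` on a real vector `(a, e, d)` (with `e = b + c`)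
is nonnegative, via an explicit sum-of-squares certificate. -/
lemma quadQ (u t a e d : ℝ) (h : u^2 + t^2 = 1) :
    (u^2*a + u*t*e + t^2*d)^2 ≤
      (2+Real.sqrt 2)/4*(a^2+d^2) + (2+Real.sqrt 2)/8*e^2 + Real.sqrt 2/8*(a+d)^2 := by
  set s := Real.sqrt 2 with hsdef
  have hs : s^2 = 2 := Real.sq_sqrt (by norm_num)
  have hs0 : (0:ℝ) < s := Real.sqrt_pos.mpr (by norm_num)
  have key : 8*s*((2+s)/4*(a^2+d^2) + (2+s)/8*e^2 + s/8*(a+d)^2 - (u^2*a+u*t*e+t^2*d)^2)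
      = 2*(s*(a+d) - ((u^2-t^2)*(a-d)+2*u*t*e))^2
        + (2*s+2)*(-(2*u*t)*(a-d)+(u^2-t^2)*e)^2 := by
    linear_combination ((a-d)^2+e^2) * hs +
      (-2*(1+u^2+t^2)*((a-d)^2+e^2)
        - 2*s*(2*a^2+2*d^2+e^2+4*u^2*a^2+4*t^2*d^2+4*u*t*(a+d)*e+(u^2+t^2)*e^2)) * h
  nlinarith [sq_nonneg (s*(a+d) - ((u^2-t^2)*(a-d)+2*u*t*e)),
    sq_nonneg (-(2*u*t)*(a-d)+(u^2-t^2)*e), hs0, key]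

lemma symProj2_herm : symProj2.IsHermitian := by
  ext p q
  simp [symProj2, Matrix.conjTranspose_apply, apply_ite (star : ℂ → ℂ), and_comm]
  congr 1 <;> [skip; congr 1] <;>
    [skip; exact propext ⟨fun h => ⟨h.2.symm, h.1.symm⟩, fun h => ⟨h.2.symm, h.1.symm⟩⟩]
  simp [eq_comm]

lemma phi_herm : phiPlusProj.IsHermitian := by
  ext p q
  simp [phiPlusProj, Matrix.conjTranspose_apply, apply_ite (star : ℂ → ℂ)]
  split_ifs <;> simp

lemma rtc_herm (v : Fin 2 → ℝ) : (realTwoCopy v).IsHermitian := by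
  ext p q
  simp [realTwoCopy, Matrix.conjTranspose_apply]
  ring

lemma herm_real_smul (c : ℝ) {n : Type*} [Fintype n] {A : Matrix n n ℂ}
    (hA : A.IsHermitian) : ((c : ℂ) • A).IsHermitian := by
  have : ((c : ℂ) • A)ᴴ = (c : ℂ) • A := by
    rw [Matrix.conjTranspose_smul, hA.eq]
    congr 1
    simp [Complex.star_def, Complex.conj_ofReal]
  exact this

set_option maxHeartbeats 1000000 in
/-- Positive semidefiniteness of `α Π_sym + β |φ⁺⟩⟨φ⁺| - |ψψ⟩⟨ψψ|`. -/
lemma core_psd (v : Fin 2 → ℝ) (hv : v 0 ^ 2 + v 1 ^ 2 = 1) :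
    ((((2 + Real.sqrt 2) / 4 : ℝ) : ℂ) • symProj2 +
      ((Real.sqrt 2 / 4 : ℝ) : ℂ) • phiPlusProj - realTwoCopy v).PosSemidef := by
  refine Matrix.PosSemidef.of_dotProduct_mulVec_nonneg
    (((herm_real_smul _ symProj2_herm).add (herm_real_smul _ phi_herm)).sub
    (rtc_herm v)) fun x => ?_
  rw [Complex.nonneg_iff]
  constructor
  · simp [dotProduct, Matrix.mulVec, Fintype.sum_prod_type, Fin.sum_univ_two,
      symProj2, phiPlusProj, realTwoCopy, Matrix.sub_apply, Matrix.add_apply,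
      Matrix.smul_apply, Matrix.of_apply, smul_eq_mul, Prod.ext_iff]
    linarith [quadQ (v 0) (v 1) (x (0,0)).re ((x (0,1)).re + (x (1,0)).re) (x (1,1)).re hv,
      quadQ (v 0) (v 1) (x (0,0)).im ((x (0,1)).im + (x (1,0)).im) (x (1,1)).im hv]
  · simp [dotProduct, Matrix.mulVec, Fintype.sum_prod_type, Fin.sum_univ_two,
      symProj2, phiPlusProj, realTwoCopy, Matrix.sub_apply, Matrix.add_apply,
      Matrix.smul_apply, Matrix.of_apply, smul_eq_mul, Prod.ext_iff]
    ring

lemma psd_real_smul {n : Type*} [Fintype n] {A : Matrix n n ℂ}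
    (hA : A.PosSemidef) {c : ℝ} (hc : 0 ≤ c) : ((c : ℂ) • A).PosSemidef := by
  refine Matrix.PosSemidef.of_dotProduct_mulVec_nonneg (herm_real_smul _ hA.1) fun x => ?_
  rw [Matrix.smul_mulVec, dotProduct_smul, smul_eq_mul]
  exact mul_nonneg (by exact_mod_cast Complex.zero_le_real.mpr hc) (hA.dotProduct_mulVec_nonneg x)

lemma trace_nonneg_of_psd {n : Type*} [Fintype n] [DecidableEq n] {A : Matrix n n ℂ}
    (hA : A.PosSemidef) : 0 ≤ A.trace := by
  have hd : ∀ i, 0 ≤ A i i := fun i => by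
    have h := hA.dotProduct_mulVec_nonneg (Pi.single i 1)
    simpa [dotProduct, Matrix.mulVec, Pi.single_apply] using h
  exact Finset.sum_nonneg fun i _ => hd i

lemma trace_mul_nonneg_of_psd {n : Type*} [Fintype n] [DecidableEq n]
    {A B : Matrix n n ℂ} (hA : A.PosSemidef) (hB : B.PosSemidef) :
    0 ≤ (A * B).trace := by
  open scoped MatrixOrder Matrix.Norms.L2Operator in
  obtain ⟨C, rfl⟩ := CStarAlgebra.nonneg_iff_eq_star_mul_self.mp hB.nonneg
  rw [Matrix.star_eq_conjTranspose]
  rw [← Matrix.mul_assoc, Matrix.trace_mul_comm]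
  exact trace_nonneg_of_psd (by simpa [Matrix.mul_assoc] using
    hA.mul_mul_conjTranspose_same C)

/-- Trace of the bounding operator. -/
lemma trace_core :
    ((((2 + Real.sqrt 2) / 4 : ℝ) : ℂ) • symProj2 +
      ((Real.sqrt 2 / 4 : ℝ) : ℂ) • phiPlusProj).trace
      = (((3 / 2 + Real.sqrt 2) : ℝ) : ℂ) := by
  simp [Matrix.trace, Matrix.diag, Fintype.sum_prod_type, Fin.sum_univ_two,
    symProj2, phiPlusProj, Matrix.add_apply, Matrix.smul_apply, Matrix.of_apply,
    smul_eq_mul]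
  ring

/-- With `α = (2+√2)/4`, `β = √2/4` and `X = (1/N)(α Π_sym + β |φ⁺⟩⟨φ⁺|)`:
for every real unit vector `|ψ⟩ ∈ ℝ²`, `(1/N)|ψ⟩⟨ψ|⊗|ψ⟩⟨ψ| ⪯ X`, and
`Tr X = (1/N)(3/2 + √2)`; hence any POVM discriminating two copies of `N ≥ 3` pure real
qubits has average success probability at most `(1/N)(3/2 + √2)`. -/
theorem rebit_two_copy_upper_bound (N : ℕ) (hN : 3 ≤ N) :
    (∀ v : Fin 2 → ℝ, v 0 ^ 2 + v 1 ^ 2 = 1 →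
      ((N : ℂ)⁻¹ • ((((2 + Real.sqrt 2) / 4 : ℝ) : ℂ) • symProj2 +
          ((Real.sqrt 2 / 4 : ℝ) : ℂ) • phiPlusProj) -
        (N : ℂ)⁻¹ • realTwoCopy v).PosSemidef) ∧
    ((N : ℂ)⁻¹ • ((((2 + Real.sqrt 2) / 4 : ℝ) : ℂ) • symProj2 +
        ((Real.sqrt 2 / 4 : ℝ) : ℂ) • phiPlusProj)).trace =
      (((3 / 2 + Real.sqrt 2) / N : ℝ) : ℂ) ∧
    (∀ ψ : Fin N → Fin 2 → ℝ, (∀ i, ψ i 0 ^ 2 + ψ i 1 ^ 2 = 1) →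
      ∀ M : Fin N → Matrix (Fin 2 × Fin 2) (Fin 2 × Fin 2) ℂ,
        (∀ i, (M i).PosSemidef) → (∑ i, M i = 1) →
        (N : ℝ)⁻¹ * (∑ i, (realTwoCopy (ψ i) * M i).trace).re ≤
          (3 / 2 + Real.sqrt 2) / N) := by
  have hNpos : 0 < (N : ℝ) := by exact_mod_cast Nat.lt_of_lt_of_le (by norm_num) hN
  have hN0 : (N : ℝ) ≠ 0 := ne_of_gt hNpos
  have hNC : (N : ℂ) ≠ 0 := by exact_mod_cast (by exact_mod_cast hN0 : ((N : ℝ) : ℂ) ≠ 0)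
  have hXpsd : ∀ v : Fin 2 → ℝ, v 0 ^ 2 + v 1 ^ 2 = 1 →
      ((N : ℂ)⁻¹ • ((((2 + Real.sqrt 2) / 4 : ℝ) : ℂ) • symProj2 +
          ((Real.sqrt 2 / 4 : ℝ) : ℂ) • phiPlusProj) -
        (N : ℂ)⁻¹ • realTwoCopy v).PosSemidef := by
    intro v hv
    rw [← smul_sub]
    have : ((N : ℂ))⁻¹ = (((N : ℝ)⁻¹ : ℝ) : ℂ) := by push_cast; ring
    rw [this]
    exact psd_real_smul (core_psd v hv) (by positivity)
  have htr : ((N : ℂ)⁻¹ • ((((2 + Real.sqrt 2) / 4 : ℝ) : ℂ) • symProj2 +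
        ((Real.sqrt 2 / 4 : ℝ) : ℂ) • phiPlusProj)).trace =
      (((3 / 2 + Real.sqrt 2) / N : ℝ) : ℂ) := by
    rw [Matrix.trace_smul, trace_core, smul_eq_mul, Complex.ofReal_div]
    push_cast
    ring
  refine ⟨hXpsd, htr, ?_⟩
  intro ψ hψ M hM hsum
  set X : Matrix (Fin 2 × Fin 2) (Fin 2 × Fin 2) ℂ :=
    (N : ℂ)⁻¹ • ((((2 + Real.sqrt 2) / 4 : ℝ) : ℂ) • symProj2 +
      ((Real.sqrt 2 / 4 : ℝ) : ℂ) • phiPlusProj) with hXdef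
  have hstep : ∀ i, (N : ℝ)⁻¹ * ((realTwoCopy (ψ i) * M i).trace).re ≤
      ((X * M i).trace).re := by
    intro i
    have h1 : 0 ≤ (((X - (N : ℂ)⁻¹ • realTwoCopy (ψ i)) * M i).trace) :=
      trace_mul_nonneg_of_psd (hXpsd (ψ i) (hψ i)) (hM i)
    have h2 : ((X - (N : ℂ)⁻¹ • realTwoCopy (ψ i)) * M i).trace
        = (X * M i).trace - (N : ℂ)⁻¹ * ((realTwoCopy (ψ i) * M i).trace) := by
      simp only [hXdef, Matrix.sub_mul, Matrix.trace_sub, Matrix.smul_mul,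
        Matrix.trace_smul, smul_eq_mul]
    rw [h2] at h1
    have h3 := (Complex.nonneg_iff.mp h1).1
    simp only [Complex.sub_re, Complex.mul_re] at h3
    have h4 : ((N : ℂ)⁻¹).re = (N : ℝ)⁻¹ := by
      simp [Complex.inv_re, Complex.normSq_natCast]
    have h5 : ((N : ℂ)⁻¹).im = 0 := by simp
    rw [h4, h5] at h3
    linarith
  have hsum2 : ∑ i, ((X * M i).trace).re = (3 / 2 + Real.sqrt 2) / N := by
    have : ∑ i, (X * M i).trace = (((3 / 2 + Real.sqrt 2) / N : ℝ) : ℂ) := by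
      rw [← Matrix.trace_sum, ← Finset.mul_sum, hsum, mul_one, ← htr, hXdef]
    calc ∑ i, ((X * M i).trace).re = (∑ i, (X * M i).trace).re := by
          rw [Complex.re_sum]
      _ = (3 / 2 + Real.sqrt 2) / N := by rw [this, Complex.ofReal_re]
  calc (N : ℝ)⁻¹ * (∑ i, (realTwoCopy (ψ i) * M i).trace).re
      = ∑ i, (N : ℝ)⁻¹ * ((realTwoCopy (ψ i) * M i).trace).re := by
        rw [Complex.re_sum, Finset.mul_sum]
    _ ≤ ∑ i, ((X * M i).trace).re := Finset.sum_le_sum fun i _ => hstep i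
    _ = (3 / 2 + Real.sqrt 2) / N := hsum2
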